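/- Let G be a plane graph whose outer face is bounded by a cycle C, let K be a non-facial cycle in G, and let H be the subgraph of G drawn in the closed disk bounded by K. If G is C-critical for k-coloring, then H is K-critical for k-coloring. -/

import Mathlib

open Set

/-- A plane embedding (drawing) of a simple graph: vertices are mapped injectively to
points of the plane, and every edge is drawn as a simple arc between the images of its
endpoints; arcs meet each other only at images of shared endpoints, and an arc meets
the set of vertex images only at the images of its own endpoints. -/
structure PlaneEmbedding {V : Type*} (G : SimpleGraph V) where
  vert : V → ℝ × ℝ
  vertInj : Function.Injective vert
  arc : Sym2 V → Set (ℝ × ℝ)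
  arc_arc : ∀ e ∈ G.edgeSet, ∃ f : ℝ → ℝ × ℝ,
    ContinuousOn f (Icc 0 1) ∧ InjOn f (Icc 0 1) ∧ f '' Icc 0 1 = arc e ∧
    ∀ u v : V, e = s(u, v) → (f 0 = vert u ∧ f 1 = vert v) ∨ (f 0 = vert v ∧ f 1 = vert u)
  arc_inter : ∀ e ∈ G.edgeSet, ∀ e' ∈ G.edgeSet, e ≠ e' →
    arc e ∩ arc e' ⊆ vert '' {v | v ∈ e ∧ v ∈ e'}
  arc_vert : ∀ e ∈ G.edgeSet, arc e ∩ range vert ⊆ vert '' {v | v ∈ e}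

variable {V : Type*} {G : SimpleGraph V}

/-- The point set of the plane used by the drawing of a subgraph `H` of `G`:
the images of the vertices of `H` together with the arcs of its edges. -/
def PlaneEmbedding.drawing (emb : PlaneEmbedding G) (H : G.Subgraph) : Set (ℝ × ℝ) :=
  emb.vert '' H.verts ∪ ⋃ e ∈ H.edgeSet, emb.arc e

/-- A face of the plane embedding: a connected component of the complement of the
drawing of the whole graph. -/
def PlaneEmbedding.IsFace (emb : PlaneEmbedding G) (F : Set (ℝ × ℝ)) : Prop :=
  ∃ x ∉ emb.drawing ⊤, F = connectedComponentIn (emb.drawing ⊤)ᶜ x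

/-- The closed region bounded by a point set `S` (for `S` a Jordan curve, this is the
closed disk bounded by `S`): `S` together with all bounded connected components of its
complement. -/
def closedRegion (S : Set (ℝ × ℝ)) : Set (ℝ × ℝ) :=
  S ∪ {x | x ∉ S ∧ Bornology.IsBounded (connectedComponentIn Sᶜ x)}

/-- The subgraph of `G` drawn inside a region `D` of the plane: its edges are the edges
of `G` whose arcs lie in `D`, and its vertices are the endpoints of these edges together
with all vertices drawn in `D`. -/
def PlaneEmbedding.drawnIn (emb : PlaneEmbedding G) (D : Set (ℝ × ℝ)) : G.Subgraph where
  verts := {u | emb.vert u ∈ D ∨ ∃ w, G.Adj u w ∧ emb.arc s(u, w) ⊆ D}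
  Adj u v := G.Adj u v ∧ emb.arc s(u, v) ⊆ D
  adj_sub h := h.1
  edge_vert h := Or.inr ⟨_, h⟩
  symm := ⟨fun u v h => ⟨h.1.symm, by rw [Sym2.eq_swap]; exact h.2⟩⟩

/-- `CriticalFor G H C k`: the subgraph `H` of `G` is `C`-critical for `k`-coloring,
i.e. for every proper subgraph `H'` of `H` containing `C` there is a proper `k`-coloring
of `C` that extends to a proper `k`-coloring of `H'` but not to one of `H`. -/
def CriticalFor (G : SimpleGraph V) (H C : G.Subgraph) (k : ℕ) : Prop :=
  ∀ H' : G.Subgraph, C ≤ H' → H' ≤ H → H' ≠ H →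
    ∃ φ : V → Fin k,
      (∀ u v, C.Adj u v → φ u ≠ φ v) ∧
      (∃ ψ : V → Fin k, (∀ v ∈ C.verts, ψ v = φ v) ∧ ∀ u v, H'.Adj u v → ψ u ≠ ψ v) ∧
      ¬ ∃ ψ : V → Fin k, (∀ v ∈ C.verts, ψ v = φ v) ∧ ∀ u v, H.Adj u v → ψ u ≠ ψ v

/-! The closed disk `D` bounded by `K` is cut off from the rest of `G` by `K`: an arc starting
in `D` and leaving it must cross the drawing of `K`, which it can only do at a vertex of `K`.
The outer face is unbounded and avoids `K`, so its boundary `C` meets `D` only inside `K`.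
Given a proper subgraph `H'` of `H` containing `K`, apply the `C`-criticality of `G` to `H'`
together with everything of `G` outside `H`. The resulting colouring extends from `K` to `H'`;
an extension to `H` would agree with it on `K` and could be glued with it into a colouring
of `G`, which does not exist. -/

open SimpleGraph

theorem SimpleGraph.Subgraph.piecewise_ne_of_adj {α : Type*} {H K : G.Subgraph}
    [DecidablePred (· ∈ H.verts)] {θ ψ : V → α} (hθ : ∀ u v, H.Adj u v → θ u ≠ θ v)
    (hψ : ∀ u v, G.Adj u v → ¬ H.Adj u v → ψ u ≠ ψ v) (hθψ : ∀ v ∈ K.verts, θ v = ψ v)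
    (hsep : ∀ ⦃u v⦄, u ∈ H.verts → u ∉ K.verts → G.Adj u v → H.Adj u v)
    {u v : V} (huv : G.Adj u v) : H.verts.piecewise θ ψ u ≠ H.verts.piecewise θ ψ v := by
  by_cases hH : H.Adj u v
  · rw [piecewise_eq_of_mem _ _ _ (H.edge_vert hH),
      piecewise_eq_of_mem _ _ _ (H.edge_vert hH.symm)]
    exact hθ u v hH
  have hout : ∀ ⦃x y⦄, G.Adj x y → ¬ H.Adj x y → H.verts.piecewise θ ψ x = ψ x := by
    intro x y hxy hH
    by_cases hx : x ∈ H.verts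
    · rw [piecewise_eq_of_mem _ _ _ hx]
      exact hθψ x (by_contra fun hxK => hH (hsep hx hxK hxy))
    · exact piecewise_eq_of_notMem _ _ _ hx
  rw [hout huv hH, hout huv.symm fun h => hH h.symm]
  exact hψ u v huv hH

theorem CriticalFor.of_separating {C K H : G.Subgraph} {k : ℕ} (hG : CriticalFor G ⊤ C k)
    (hCH : C ⊓ H ≤ K) (hsep : ∀ ⦃u v⦄, u ∈ H.verts → u ∉ K.verts → G.Adj u v → H.Adj u v) :
    CriticalFor G H K k := by
  classical
  intro H' hKH' hH'H hne
  have hout : ∀ ⦃u v⦄, G.Adj u v → ¬ H.Adj u v → u ∈ H.verts → u ∈ H'.verts :=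
    fun u v huv hH hu => hKH'.1 (by_contra fun huK => hH (hsep hu huK huv))
  let H'' : G.Subgraph :=
    { verts := H'.verts ∪ H.vertsᶜ
      Adj := fun u v => H'.Adj u v ∨ (G.Adj u v ∧ ¬ H.Adj u v)
      adj_sub := fun h => h.elim H'.adj_sub And.left
      edge_vert := fun {u _} h => h.elim (fun h => Or.inl (H'.edge_vert h))
        fun ⟨huv, hH⟩ => (em (u ∈ H.verts)).imp (hout huv hH) id
      symm := ⟨fun _ _ h =>
        h.imp (fun h => h.symm) fun ⟨huv, hH⟩ => ⟨huv.symm, fun h => hH h.symm⟩⟩ }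
  have hCH'' : C ≤ H'' := by
    refine ⟨fun v hv => ?_, fun u v huv => ?_⟩
    · by_cases hvH : v ∈ H.verts
      · exact Or.inl (hKH'.1 (hCH.1 ⟨hv, hvH⟩))
      · exact Or.inr hvH
    · by_cases hH : H.Adj u v
      · exact Or.inl (hKH'.2 (hCH.2 ⟨huv, hH⟩))
      · exact Or.inr ⟨C.adj_sub huv, hH⟩
  have hH''top : H'' ≠ ⊤ := by
    intro htop
    refine hne (le_antisymm hH'H ⟨fun v hv => ?_, fun u v huv => ?_⟩)
    · have : v ∈ H''.verts := htop ▸ Set.mem_univ v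
      exact this.resolve_right (not_not_intro hv)
    · have : H''.Adj u v := htop ▸ H.adj_sub huv
      exact this.resolve_right fun h => h.2 huv
  obtain ⟨φ, -, ⟨ψ, hψC, hψ⟩, hnoext⟩ := hG H'' hCH'' le_top hH''top
  refine ⟨ψ, fun u v h => hψ u v (Or.inl (hKH'.2 h)),
    ⟨ψ, fun _ _ => rfl, fun u v h => hψ u v (Or.inl h)⟩, ?_⟩
  rintro ⟨θ, hθK, hθ⟩
  refine hnoext ⟨H.verts.piecewise θ ψ, fun v hv => ?_, fun u v huv =>
    Subgraph.piecewise_ne_of_adj hθ (fun u v huv hH => hψ u v (Or.inr ⟨huv, hH⟩)) hθK hsep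
      (Subgraph.top_adj.1 huv)⟩
  by_cases hvH : v ∈ H.verts
  · rw [piecewise_eq_of_mem _ _ _ hvH, hθK v (hCH.1 ⟨hv, hvH⟩), hψC v hv]
  · rw [piecewise_eq_of_notMem _ _ _ hvH, hψC v hv]

theorem IsPreconnected.inter_nonempty_of_mem_closedRegion {S A : Set (ℝ × ℝ)}
    (hA : IsPreconnected A) {x y : ℝ × ℝ} (hx : x ∈ A) (hy : y ∈ A)
    (hxS : x ∈ closedRegion S) (hyS : y ∉ closedRegion S) : (A ∩ S).Nonempty := by
  by_contra h
  have hAS : A ⊆ Sᶜ := fun z hz hzS => h ⟨z, hz, hzS⟩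
  have hxy := connectedComponentIn_eq (hA.subset_connectedComponentIn hx hAS hy)
  rcases hxS with hxS | ⟨-, hxb⟩
  · exact hAS hx hxS
  · exact hyS (Or.inr ⟨hAS hy, hxy ▸ hxb⟩)

theorem closure_inter_closedRegion_subset {S F : Set (ℝ × ℝ)} (hS : IsClosed S)
    (hF : IsPreconnected F) (hFS : Disjoint F S) (hFub : ¬ Bornology.IsBounded F) :
    closure F ∩ closedRegion S ⊆ S := by
  rintro p ⟨hp, hpS | ⟨hpS, hpb⟩⟩
  · exact hpS
  obtain ⟨y, hyB, hyF⟩ := mem_closure_iff.1 hp _ hS.isOpen_compl.connectedComponentIn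
    (mem_connectedComponentIn hpS)
  refine absurd (hpb.subset ?_) hFub
  rw [connectedComponentIn_eq hyB]
  exact hF.subset_connectedComponentIn hyF hFS.subset_compl_right

namespace PlaneEmbedding

variable (emb : PlaneEmbedding G)

theorem drawing_mono {W W' : G.Subgraph} (h : W ≤ W') : emb.drawing W ⊆ emb.drawing W' :=
  union_subset_union (image_mono h.1) (biUnion_subset_biUnion_left (Subgraph.edgeSet_mono h))

theorem exists_arc_param {u v : V} (h : G.Adj u v) :
    ∃ f : ℝ → ℝ × ℝ, ContinuousOn f (Icc 0 1) ∧ InjOn f (Icc 0 1) ∧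
      f '' Icc 0 1 = emb.arc s(u, v) ∧ f 0 = emb.vert u ∧ f 1 = emb.vert v := by
  obtain ⟨f, hc, hi, himg, hend⟩ := emb.arc_arc s(u, v) h
  rcases hend u v rfl with ⟨h0, h1⟩ | ⟨h0, h1⟩
  · exact ⟨f, hc, hi, himg, h0, h1⟩
  have hflip : MapsTo (fun t : ℝ => 1 - t) (Icc 0 1) (Icc 0 1) :=
    fun t ht => ⟨by linarith [ht.2], by linarith [ht.1]⟩
  refine ⟨fun t => f (1 - t), hc.comp (by fun_prop) hflip, hi.comp ?_ hflip, ?_, by simpa, by simpa⟩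
  · exact fun a _ b _ hab => by simpa using hab
  · rw [← himg, ← image_image (g := f)]
    simp

theorem vert_mem_arc {u v : V} (h : G.Adj u v) : emb.vert u ∈ emb.arc s(u, v) := by
  obtain ⟨f, -, -, himg, h0, -⟩ := emb.exists_arc_param h
  exact himg ▸ ⟨0, left_mem_Icc.2 zero_le_one, h0⟩

theorem vert_mem_of_mem_drawnIn_verts {D : Set (ℝ × ℝ)} {u : V}
    (h : u ∈ (emb.drawnIn D).verts) : emb.vert u ∈ D :=
  h.elim id fun ⟨_, hw, harc⟩ => harc (emb.vert_mem_arc hw)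

theorem isCompact_drawing {W : G.Subgraph} (hV : W.verts.Finite) (hE : W.edgeSet.Finite) :
    IsCompact (emb.drawing W) := by
  refine (hV.image _).isCompact.union (hE.isCompact_biUnion fun e he => ?_)
  obtain ⟨f, hc, -, himg, -⟩ := emb.arc_arc e (W.edgeSet_subset he)
  exact himg ▸ isCompact_Icc.image_of_continuousOn hc

theorem mem_verts_of_vert_mem_drawing {W : G.Subgraph} {v : V}
    (h : emb.vert v ∈ emb.drawing W) : v ∈ W.verts := by
  rcases h with ⟨u, hu, huv⟩ | h
  · rwa [← emb.vertInj huv]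
  · obtain ⟨e, he, hv⟩ := mem_iUnion₂.1 h
    obtain ⟨x, hx, hxv⟩ := emb.arc_vert e (W.edgeSet_subset he) ⟨hv, mem_range_self v⟩
    exact W.mem_verts_of_mem_edge he (emb.vertInj hxv ▸ hx)

theorem exists_eq_vert_of_mem_arc_of_mem_drawing {W : G.Subgraph} {e : Sym2 V}
    (he : e ∈ G.edgeSet) (heW : e ∉ W.edgeSet) {q : ℝ × ℝ} (hq : q ∈ emb.arc e)
    (hqW : q ∈ emb.drawing W) : ∃ x ∈ W.verts, x ∈ e ∧ q = emb.vert x := by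
  rcases hqW with ⟨x, hx, rfl⟩ | hqW
  · obtain ⟨y, hy, hyx⟩ := emb.arc_vert e he ⟨hq, mem_range_self x⟩
    exact ⟨x, hx, emb.vertInj hyx ▸ hy, rfl⟩
  · obtain ⟨e', he', hq'⟩ := mem_iUnion₂.1 hqW
    obtain ⟨x, ⟨hxe, hxe'⟩, rfl⟩ := emb.arc_inter e he e' (W.edgeSet_subset he')
      (fun h => heW (h ▸ he')) ⟨hq, hq'⟩
    exact ⟨x, W.mem_verts_of_mem_edge he' hxe', hxe, rfl⟩

theorem mem_edgeSet_of_arc_subset_drawing {W : G.Subgraph} {e : Sym2 V} (he : e ∈ G.edgeSet)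
    (h : emb.arc e ⊆ emb.drawing W) : e ∈ W.edgeSet := by
  by_contra heW
  have harc : emb.arc e ⊆ emb.vert '' {x | x ∈ e} := fun q hq => by
    obtain ⟨x, -, hxe, rfl⟩ := emb.exists_eq_vert_of_mem_arc_of_mem_drawing he heW hq (h hq)
    exact mem_image_of_mem _ hxe
  obtain ⟨f, -, hi, himg, -⟩ := emb.arc_arc e he
  -- an arc is infinite, but would lie in the image of the two endpoints
  refine (Icc_infinite zero_lt_one).image hi ?_
  rw [himg]
  refine (Finite.image _ ?_).subset harc
  induction e using Sym2.ind with
  | _ a b => exact (toFinite {a, b}).subset fun x hx => by simpa using hx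

theorem arc_subset_closedRegion {W : G.Subgraph} {u v : V}
    (hu : emb.vert u ∈ closedRegion (emb.drawing W)) (huW : u ∉ W.verts) (h : G.Adj u v) :
    emb.arc s(u, v) ⊆ closedRegion (emb.drawing W) := by
  intro p hp
  by_contra hpD
  obtain ⟨f, hc, hi, himg, h0, h1⟩ := emb.exists_arc_param h
  obtain ⟨t, ht, rfl⟩ := himg ▸ hp
  have hsub : Icc 0 t ⊆ Icc (0 : ℝ) 1 := Icc_subset_Icc_right ht.2
  obtain ⟨_, ⟨s, hs, rfl⟩, hsW⟩ :=
    (isPreconnected_Icc.image f (hc.mono hsub)).inter_nonempty_of_mem_closedRegion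
      (mem_image_of_mem f (left_mem_Icc.2 ht.1)) (mem_image_of_mem f (right_mem_Icc.2 ht.1))
      (h0 ▸ hu) hpD
  have heW : s(u, v) ∉ W.edgeSet := fun he =>
    huW (W.mem_verts_of_mem_edge he (Sym2.mem_mk_left u v))
  obtain ⟨x, hxW, hxe, hsx⟩ := emb.exists_eq_vert_of_mem_arc_of_mem_drawing h heW
    (himg ▸ mem_image_of_mem f (hsub hs)) hsW
  obtain rfl | rfl := Sym2.mem_iff.1 hxe
  · exact huW hxW
  -- the arc can only reach the drawing of `W` at its far end `v`, hence `p` is that end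
  have hs1 : s = 1 := hi (hsub hs) (right_mem_Icc.2 zero_le_one) (hsx.trans h1.symm)
  obtain rfl : t = 1 := le_antisymm ht.2 (hs1 ▸ hs.2)
  subst hs1
  exact hpD (Or.inl hsW)

theorem inf_drawnIn_le {C K : G.Subgraph} {D : Set (ℝ × ℝ)}
    (h : emb.drawing C ∩ D ⊆ emb.drawing K) : C ⊓ emb.drawnIn D ≤ K := by
  refine ⟨fun v ⟨hvC, hvD⟩ => emb.mem_verts_of_vert_mem_drawing
    (h ⟨Or.inl (mem_image_of_mem _ hvC), emb.vert_mem_of_mem_drawnIn_verts hvD⟩),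
    fun u v ⟨huvC, huvD⟩ => ?_⟩
  refine emb.mem_edgeSet_of_arc_subset_drawing huvD.1 fun p hp => h ⟨?_, huvD.2 hp⟩
  exact Or.inr (mem_biUnion (Subgraph.mem_edgeSet.2 huvC) hp)

end PlaneEmbedding

theorem stmt_19_general (emb : PlaneEmbedding G) (k : ℕ)
    {c₀ : V} (C : G.Walk c₀ c₀)
    (houter : ∃ F, emb.IsFace F ∧ ¬ Bornology.IsBounded F ∧
      frontier F = emb.drawing C.toSubgraph)
    {k₀ : V} (K : G.Walk k₀ k₀)
    (hGcrit : CriticalFor G ⊤ C.toSubgraph k) :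
    CriticalFor G (emb.drawnIn (closedRegion (emb.drawing K.toSubgraph)))
      K.toSubgraph k := by
  obtain ⟨_, ⟨x₀, -, rfl⟩, hFub, hFfr⟩ := houter
  have hKclosed : IsClosed (emb.drawing K.toSubgraph) :=
    (emb.isCompact_drawing (K.verts_toSubgraph ▸ K.support.finite_toSet)
      (K.edgeSet_toSubgraph ▸ K.edges.finite_toSet)).isClosed
  have hFK : Disjoint (connectedComponentIn (emb.drawing ⊤)ᶜ x₀) (emb.drawing K.toSubgraph) :=
    disjoint_compl_left.mono (connectedComponentIn_subset _ _) (emb.drawing_mono le_top)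
  -- the outer face only touches the disk bounded by `K` along `K`
  have hCK : emb.drawing C.toSubgraph ∩ closedRegion (emb.drawing K.toSubgraph) ⊆
      emb.drawing K.toSubgraph := by
    rw [← hFfr]
    exact (inter_subset_inter_left _ frontier_subset_closure).trans
      (closure_inter_closedRegion_subset hKclosed isPreconnected_connectedComponentIn hFK hFub)
  refine hGcrit.of_separating (emb.inf_drawnIn_le hCK) fun u v hu huK huv => ⟨huv, ?_⟩
  exact emb.arc_subset_closedRegion (emb.vert_mem_of_mem_drawnIn_verts hu) huK huv

/-- If `G` is a plane graph whose outer face is bounded by a cycle `C`, `K` is a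
non-facial cycle of `G`, and `H` is the subgraph of `G` drawn in the closed disk
bounded by `K`, then `C`-criticality of `G` for `k`-coloring implies `K`-criticality
of `H` for `k`-coloring. -/
theorem stmt_19 (emb : PlaneEmbedding G) (k : ℕ)
    {c₀ : V} (C : G.Walk c₀ c₀) (hC : C.IsCycle)
    (houter : ∃ F, emb.IsFace F ∧ ¬ Bornology.IsBounded F ∧
      frontier F = emb.drawing C.toSubgraph)
    {k₀ : V} (K : G.Walk k₀ k₀) (hK : K.IsCycle)
    (hKnonfacial : ¬ ∃ F, emb.IsFace F ∧ frontier F = emb.drawing K.toSubgraph)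
    (hGcrit : CriticalFor G ⊤ C.toSubgraph k) :
    CriticalFor G (emb.drawnIn (closedRegion (emb.drawing K.toSubgraph)))
      K.toSubgraph k :=
  stmt_19_general emb k C houter K hGcrit
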